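/- Let $n \ge 1$ and let $u_0 \in L^1(\mathbb{R}^n)$ be compactly supported, with $\int_{\mathbb{R}^n} u_0\,dx = M$ and with center of mass at the origin, i.e. $\int_{\mathbb{R}^n} x\, u_0(x)\,dx = 0$. Define $u(\cdot,t) = G_t * u_0$ for $t>0$, where $G_t(x) = (4\pi t)^{-n/2} e^{-|x|^2/(4t)}$. Then there exists a constant $C>0$ such that $\|u(\cdot,t) - M G_t\|_{L^1(\mathbb{R}^n)} \le C\, t^{-1}$ for all $t \ge 1$. -/

import Mathlib

open Real MeasureTheory Filter

/-- The Gaussian heat kernel on `ℝⁿ`: `G t x = (4πt)^(-n/2) exp(-‖x‖²/(4t))`. -/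
noncomputable def heatKernel (n : ℕ) (t : ℝ) (x : EuclideanSpace ℝ (Fin n)) : ℝ :=
  (4 * π * t) ^ (-(n : ℝ) / 2) * Real.exp (-‖x‖ ^ 2 / (4 * t))

/-- The solution of the heat equation with initial data `u0`, `u(·,t) = G_t * u0`. -/
noncomputable def heatSol (n : ℕ) (u0 : EuclideanSpace ℝ (Fin n) → ℝ) (t : ℝ)
    (x : EuclideanSpace ℝ (Fin n)) : ℝ :=
  ∫ y, heatKernel n t (x - y) * u0 y

/-!
Since `u0` has mass `M` and vanishing first moment,
`u(x,t) - M G_t(x) = ∫ u0(y) (G_t(x - y) - G_t(x) - ∇G_t(x)·(-y)) dy`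
is an integral of second-order Taylor remainders of `G_t`. Along the segment from `x` to `x - y`
the second derivative of `G_t` is `O(‖y‖² t⁻¹ G_{2t})`, and moving the base point of `G_{2t}` by at
most `‖y‖` costs a factor `2^{n/2} e^{‖y‖²/8}` against `G_{4t}(x)` once `t ≥ 1`. So
`|u - M G_t| ≤ C t⁻¹ G_{4t}` pointwise, with `C` a weighted second moment of `|u0|`, and
`∫ G_{4t} = 1`.
-/

open Set
open scoped RealInnerProductSpace

theorem one_add_mul_exp_neg_le (u : ℝ) : (1 + u) * exp (-u) ≤ 2 * exp (-u / 2) := by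
  have h : 1 + u ≤ 2 * exp (u / 2) := by linarith [add_one_le_exp (u / 2)]
  calc (1 + u) * exp (-u) ≤ 2 * exp (u / 2) * exp (-u) := by gcongr
    _ = 2 * exp (-u / 2) := by rw [mul_assoc, ← exp_add]; ring_nf

theorem abs_sub_sub_mul_le_of_hasDerivAt {g g' g'' : ℝ → ℝ} {a b Q : ℝ} (hab : a ≤ b)
    (hg : ∀ s ∈ Icc a b, HasDerivAt g (g' s) s) (hg' : ∀ s ∈ Icc a b, HasDerivAt g' (g'' s) s)
    (hQ : ∀ s ∈ Icc a b, |g'' s| ≤ Q) :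
    |g b - g a - (b - a) * g' a| ≤ Q * (b - a) ^ 2 / 2 := by
  have hg'_lip : ∀ s ∈ Icc a b, |g' s - g' a| ≤ Q * (s - a) :=
    norm_image_sub_le_of_norm_deriv_le_segment'
      (fun s hs => (hg' s hs).hasDerivWithinAt) fun s hs => hQ s (Ico_subset_Icc_self hs)
  have hderiv : ∀ s ∈ Icc a b,
      HasDerivAt (fun s => g s - g a - (s - a) * g' a) (g' s - g' a) s := fun s hs =>
    (((hg s hs).sub_const _).sub (((hasDerivAt_id s).sub_const a).mul_const _)).congr_deriv
      (by simp)
  refine image_norm_le_of_norm_deriv_right_le_deriv_boundary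
    (B := fun s => Q * (s - a) ^ 2 / 2) (B' := fun s => Q * (s - a))
    (HasDerivAt.continuousOn hderiv)
    (fun s hs => (hderiv s (Ico_subset_Icc_self hs)).hasDerivWithinAt) (by simp) (fun s => ?_)
    (fun s hs => hg'_lip s (Ico_subset_Icc_self hs)) (right_mem_Icc.2 hab)
  exact ((((hasDerivAt_id' s).sub_const a).pow 2).const_mul Q).div_const 2 |>.congr_deriv
    (by norm_num; ring)

theorem MeasureTheory.Integrable.smul_continuous_of_hasCompactSupport {X E : Type*}
    [TopologicalSpace X] [T2Space X] [MeasurableSpace X] [OpensMeasurableSpace X] {μ : Measure X}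
    [NormedAddCommGroup E] [NormedSpace ℝ E] [SecondCountableTopologyEither X E]
    {f : X → ℝ} (hf : Integrable f μ) (hcf : HasCompactSupport f) {g : X → E}
    (hg : Continuous g) : Integrable (fun x => f x • g x) μ :=
  (hf.integrableOn.smul_continuousOn hg.continuousOn hcf).integrable_of_forall_notMem_eq_zero
    fun x hx => by simp [image_eq_zero_of_notMem_tsupport hx]

section HeatKernel

variable {n : ℕ} {t : ℝ}

theorem heatKernel_pos (ht : 0 < t) (x : EuclideanSpace ℝ (Fin n)) : 0 < heatKernel n t x := by
  unfold heatKernel; positivity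

theorem integral_heatKernel (ht : 0 < t) : ∫ x, heatKernel n t x = 1 := by
  have hb : 0 < 1 / (4 * t) := by positivity
  have h : ∀ x : EuclideanSpace ℝ (Fin n),
      heatKernel n t x = (4 * π * t) ^ (-(n : ℝ) / 2) * exp (-(1 / (4 * t)) * ‖x‖ ^ 2) :=
    fun x => by rw [heatKernel]; ring_nf
  simp_rw [h, integral_const_mul, GaussianFourier.integral_rexp_neg_mul_sq_norm hb,
    finrank_euclideanSpace_fin, show π / (1 / (4 * t)) = 4 * π * t by field_simp]
  rw [← rpow_add (by positivity), show -(n : ℝ) / 2 + n / 2 = 0 by ring, rpow_zero]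

theorem integrable_heatKernel (ht : 0 < t) : Integrable (heatKernel n t) :=
  Integrable.of_integral_ne_zero (by simp [integral_heatKernel ht])

theorem heatKernel_eq_two_rpow_mul (ht : 0 < t) (z : EuclideanSpace ℝ (Fin n)) :
    heatKernel n t z =
      2 ^ ((n : ℝ) / 2) * (4 * π * (2 * t)) ^ (-(n : ℝ) / 2) * exp (-‖z‖ ^ 2 / (4 * t)) := by
  have h : (4 * π * (2 * t)) ^ (-(n : ℝ) / 2) =
      2 ^ (-(n : ℝ) / 2) * (4 * π * t) ^ (-(n : ℝ) / 2) := by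
    rw [show 4 * π * (2 * t) = 2 * (4 * π * t) by ring, mul_rpow zero_le_two (by positivity)]
  rw [heatKernel, h, ← mul_assoc, ← rpow_add two_pos,
    show (n : ℝ) / 2 + -(n : ℝ) / 2 = 0 by ring, rpow_zero, one_mul]

theorem heatKernel_le_two_rpow_mul_exp_mul_heatKernel (ht : 0 < t)
    (x z : EuclideanSpace ℝ (Fin n)) :
    heatKernel n t z ≤
      2 ^ ((n : ℝ) / 2) * exp (‖z - x‖ ^ 2 / (4 * t)) * heatKernel n (2 * t) x := by
  have hx : ‖x‖ ^ 2 ≤ 2 * ‖z‖ ^ 2 + 2 * ‖z - x‖ ^ 2 := by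
    have h := norm_sub_le z (z - x)
    rw [sub_sub_cancel] at h
    nlinarith [norm_nonneg x, sq_nonneg (‖z‖ - ‖z - x‖)]
  have hexp : -‖z‖ ^ 2 / (4 * t) ≤ ‖z - x‖ ^ 2 / (4 * t) + -‖x‖ ^ 2 / (4 * (2 * t)) := by
    have h : ‖z - x‖ ^ 2 / (4 * t) + -‖x‖ ^ 2 / (4 * (2 * t)) - -‖z‖ ^ 2 / (4 * t) =
        (2 * ‖z‖ ^ 2 + 2 * ‖z - x‖ ^ 2 - ‖x‖ ^ 2) / (8 * t) := by
      field_simp; ring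
    linarith [div_nonneg (sub_nonneg.2 hx) (by positivity : (0 : ℝ) ≤ 8 * t)]
  calc heatKernel n t z
      = 2 ^ ((n : ℝ) / 2) * (4 * π * (2 * t)) ^ (-(n : ℝ) / 2) * exp (-‖z‖ ^ 2 / (4 * t)) :=
        heatKernel_eq_two_rpow_mul ht z
    _ ≤ 2 ^ ((n : ℝ) / 2) * (4 * π * (2 * t)) ^ (-(n : ℝ) / 2) *
          exp (‖z - x‖ ^ 2 / (4 * t) + -‖x‖ ^ 2 / (4 * (2 * t))) := by gcongr
    _ = _ := by rw [exp_add, heatKernel]; ring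

theorem hasDerivAt_heatKernel_sub_smul (x y : EuclideanSpace ℝ (Fin n)) (s : ℝ) :
    HasDerivAt (fun s => heatKernel n t (x - s • y))
      (⟪x - s • y, y⟫ / (2 * t) * heatKernel n t (x - s • y)) s := by
  have hline : HasDerivAt (fun s : ℝ => x - s • y) (-y) s := by
    simpa using ((hasDerivAt_id s).smul_const y).const_sub x
  unfold heatKernel
  exact ((hline.norm_sq.neg.div_const (4 * t)).exp.const_mul _).congr_deriv
    (by simp only [Pi.neg_apply, inner_neg_right]; ring)

theorem hasDerivAt_inner_mul_heatKernel_sub_smul (x y : EuclideanSpace ℝ (Fin n)) (s : ℝ) :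
    HasDerivAt (fun s => ⟪x - s • y, y⟫ / (2 * t) * heatKernel n t (x - s • y))
      (((⟪x - s • y, y⟫ / (2 * t)) ^ 2 - ‖y‖ ^ 2 / (2 * t)) * heatKernel n t (x - s • y)) s := by
  have hline : HasDerivAt (fun s : ℝ => x - s • y) (-y) s := by
    simpa using ((hasDerivAt_id s).smul_const y).const_sub x
  exact (((hline.inner ℝ (hasDerivAt_const s y)).div_const (2 * t)).mul
    (hasDerivAt_heatKernel_sub_smul x y s)).congr_deriv
    (by rw [inner_zero_right, inner_neg_left, real_inner_self_eq_norm_sq]; ring)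

theorem one_add_mul_heatKernel_le (ht : 0 < t) (z : EuclideanSpace ℝ (Fin n)) :
    (1 + ‖z‖ ^ 2 / (4 * t)) * heatKernel n t z ≤
      2 * 2 ^ ((n : ℝ) / 2) * heatKernel n (2 * t) z := by
  have h := one_add_mul_exp_neg_le (‖z‖ ^ 2 / (4 * t))
  have e1 : -‖z‖ ^ 2 / (4 * t) = -(‖z‖ ^ 2 / (4 * t)) := neg_div _ _
  have e2 : -‖z‖ ^ 2 / (4 * (2 * t)) = -(‖z‖ ^ 2 / (4 * t)) / 2 := by ring
  rw [heatKernel_eq_two_rpow_mul ht, heatKernel, e1, e2]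
  calc _ = 2 ^ ((n : ℝ) / 2) * (4 * π * (2 * t)) ^ (-(n : ℝ) / 2) *
        ((1 + ‖z‖ ^ 2 / (4 * t)) * rexp (-(‖z‖ ^ 2 / (4 * t)))) := by ring
    _ ≤ 2 ^ ((n : ℝ) / 2) * (4 * π * (2 * t)) ^ (-(n : ℝ) / 2) *
        (2 * rexp (-(‖z‖ ^ 2 / (4 * t)) / 2)) := by gcongr
    _ = _ := by ring

theorem abs_secondDeriv_heatKernel_le (ht : 0 < t) (y z : EuclideanSpace ℝ (Fin n)) :
    |((⟪z, y⟫ / (2 * t)) ^ 2 - ‖y‖ ^ 2 / (2 * t)) * heatKernel n t z| ≤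
      2 * 2 ^ ((n : ℝ) / 2) * (‖y‖ ^ 2 / t) * heatKernel n (2 * t) z := by
  have hinner : (⟪z, y⟫ / (2 * t)) ^ 2 ≤ ‖y‖ ^ 2 / t * (‖z‖ ^ 2 / (4 * t)) := by
    have h := real_inner_mul_inner_self_le z y
    rw [real_inner_self_eq_norm_sq, real_inner_self_eq_norm_sq] at h
    rw [div_pow, div_le_iff₀ (by positivity)]
    field_simp
    nlinarith [sq_nonneg t]
  have hcoef : |(⟪z, y⟫ / (2 * t)) ^ 2 - ‖y‖ ^ 2 / (2 * t)| ≤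
      ‖y‖ ^ 2 / t * (1 + ‖z‖ ^ 2 / (4 * t)) := by
    have h : ‖y‖ ^ 2 / (2 * t) ≤ ‖y‖ ^ 2 / t := by gcongr; linarith
    rw [abs_sub_le_iff, mul_one_add]
    have hy : 0 ≤ ‖y‖ ^ 2 / (2 * t) := by positivity
    have hyz : 0 ≤ ‖y‖ ^ 2 / t * (‖z‖ ^ 2 / (4 * t)) := by positivity
    constructor <;> linarith [sq_nonneg (⟪z, y⟫ / (2 * t))]
  rw [abs_mul, abs_of_pos (heatKernel_pos ht z)]
  calc _ ≤ ‖y‖ ^ 2 / t * (1 + ‖z‖ ^ 2 / (4 * t)) * heatKernel n t z := by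
        gcongr; exact (heatKernel_pos ht z).le
    _ = ‖y‖ ^ 2 / t * ((1 + ‖z‖ ^ 2 / (4 * t)) * heatKernel n t z) := by ring
    _ ≤ ‖y‖ ^ 2 / t * (2 * 2 ^ ((n : ℝ) / 2) * heatKernel n (2 * t) z) :=
        mul_le_mul_of_nonneg_left (one_add_mul_heatKernel_le ht z) (by positivity)
    _ = _ := by ring

theorem abs_heatKernel_sub_sub_inner_mul_le (ht : 1 ≤ t) (x y : EuclideanSpace ℝ (Fin n)) :
    |heatKernel n t (x - y) - heatKernel n t x - ⟪x, y⟫ / (2 * t) * heatKernel n t x| ≤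
      2 ^ n * exp (‖y‖ ^ 2 / 8) * (‖y‖ ^ 2 / t) * heatKernel n (4 * t) x := by
  have ht0 : 0 < t := by linarith
  have htwo : (2 : ℝ) ^ ((n : ℝ) / 2) * 2 ^ ((n : ℝ) / 2) = 2 ^ n := by
    rw [← rpow_add two_pos, add_halves, rpow_natCast]
  have hsy : ∀ s ∈ Icc (0 : ℝ) 1, ‖x - s • y - x‖ ≤ ‖y‖ := fun s hs => by
    rw [sub_sub_cancel_left, norm_neg, norm_smul, Real.norm_of_nonneg hs.1]
    exact mul_le_of_le_one_left (norm_nonneg y) hs.2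
  have hQ : ∀ s ∈ Icc (0 : ℝ) 1,
      |((⟪x - s • y, y⟫ / (2 * t)) ^ 2 - ‖y‖ ^ 2 / (2 * t)) * heatKernel n t (x - s • y)| ≤
        2 * (2 ^ n * exp (‖y‖ ^ 2 / 8) * (‖y‖ ^ 2 / t) * heatKernel n (4 * t) x) := by
    intro s hs
    calc _ ≤ 2 * 2 ^ ((n : ℝ) / 2) * (‖y‖ ^ 2 / t) * heatKernel n (2 * t) (x - s • y) :=
          abs_secondDeriv_heatKernel_le ht0 y _
      _ ≤ 2 * 2 ^ ((n : ℝ) / 2) * (‖y‖ ^ 2 / t) *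
            (2 ^ ((n : ℝ) / 2) * exp (‖y‖ ^ 2 / 8) * heatKernel n (2 * (2 * t)) x) := by
          gcongr
          refine (heatKernel_le_two_rpow_mul_exp_mul_heatKernel (by positivity) x _).trans ?_
          gcongr
          · exact (heatKernel_pos (by positivity) x).le
          · exact hsy s hs
          · linarith
      _ = _ := by rw [show 2 * (2 * t) = 4 * t by ring, ← htwo]; ring
  simpa using abs_sub_sub_mul_le_of_hasDerivAt zero_le_one
    (fun s _ => hasDerivAt_heatKernel_sub_smul x y s)
    (fun s _ => hasDerivAt_inner_mul_heatKernel_sub_smul x y s) hQ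

end HeatKernel

section HeatSol

variable {n : ℕ} {t : ℝ} {u0 : EuclideanSpace ℝ (Fin n) → ℝ}

theorem heatSol_sub_integral_mul_heatKernel (hu0 : Integrable u0) (hsupp : HasCompactSupport u0)
    (hcenter : ∫ y, u0 y • y = 0) (x : EuclideanSpace ℝ (Fin n)) :
    heatSol n u0 t x - (∫ y, u0 y) * heatKernel n t x =
      ∫ y, u0 y *
        (heatKernel n t (x - y) - heatKernel n t x - ⟪x, y⟫ / (2 * t) * heatKernel n t x) := by
  have hconv : Integrable fun y => u0 y * heatKernel n t (x - y) :=
    hu0.smul_continuous_of_hasCompactSupport hsupp (by unfold heatKernel; fun_prop)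
  have hmoment : Integrable fun y => u0 y • y :=
    hu0.smul_continuous_of_hasCompactSupport hsupp continuous_id
  have hfirst : ∫ y, ⟪x, u0 y • y⟫ = 0 := by rw [integral_inner hmoment, hcenter, inner_zero_right]
  have hsplit : (fun y => u0 y * (heatKernel n t (x - y) - heatKernel n t x -
      ⟪x, y⟫ / (2 * t) * heatKernel n t x)) = fun y => u0 y * heatKernel n t (x - y) -
        u0 y * heatKernel n t x - ⟪x, u0 y • y⟫ * (heatKernel n t x / (2 * t)) := by
    ext y; rw [inner_smul_right]; ring
  have hdiff : Integrable fun y => u0 y * heatKernel n t (x - y) - u0 y * heatKernel n t x :=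
    hconv.sub (hu0.mul_const _)
  rw [hsplit, integral_sub hdiff ((hmoment.const_inner x).mul_const _),
    integral_sub hconv (hu0.mul_const _), integral_mul_const, integral_mul_const, hfirst, heatSol]
  simp_rw [mul_comm (heatKernel n t _) (u0 _)]
  ring

theorem abs_heatSol_sub_integral_mul_heatKernel_le (ht : 1 ≤ t) (hu0 : Integrable u0)
    (hsupp : HasCompactSupport u0) (hcenter : ∫ y, u0 y • y = 0) (x : EuclideanSpace ℝ (Fin n)) :
    |heatSol n u0 t x - (∫ y, u0 y) * heatKernel n t x| ≤
      (∫ y, |u0 y| * (‖y‖ ^ 2 * exp (‖y‖ ^ 2 / 8))) * (2 ^ n / t * heatKernel n (4 * t) x) := by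
  have hweight : Integrable fun y => |u0 y| * (‖y‖ ^ 2 * exp (‖y‖ ^ 2 / 8)) :=
    hu0.abs.smul_continuous_of_hasCompactSupport hsupp.abs (by fun_prop)
  rw [heatSol_sub_integral_mul_heatKernel hu0 hsupp hcenter, ← integral_mul_const,
    ← Real.norm_eq_abs]
  refine norm_integral_le_of_norm_le (hweight.mul_const _) (Eventually.of_forall fun y => ?_)
  rw [Real.norm_eq_abs, abs_mul]
  calc _ ≤ |u0 y| * (2 ^ n * exp (‖y‖ ^ 2 / 8) * (‖y‖ ^ 2 / t) * heatKernel n (4 * t) x) := by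
        gcongr; exact abs_heatKernel_sub_sub_inner_mul_le ht x y
    _ = _ := by ring

end HeatSol

theorem heat_L1_convergence_rate_general (n : ℕ)
    (u0 : EuclideanSpace ℝ (Fin n) → ℝ) (hu0 : Integrable u0)
    (hsupp : HasCompactSupport u0) (M : ℝ) (hM : ∫ x, u0 x = M)
    (hcenter : ∫ x, u0 x • x = (0 : EuclideanSpace ℝ (Fin n))) :
    ∃ C > 0, ∀ t ≥ (1 : ℝ),
      (∫ x, |heatSol n u0 t x - M * heatKernel n t x|) ≤ C / t := by
  subst hM
  set m := ∫ y, |u0 y| * (‖y‖ ^ 2 * exp (‖y‖ ^ 2 / 8))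
  have hm : 0 ≤ m := integral_nonneg fun y => by positivity
  refine ⟨m * 2 ^ n + 1, by positivity, fun t ht => ?_⟩
  calc (∫ x, |heatSol n u0 t x - (∫ y, u0 y) * heatKernel n t x|)
      ≤ ∫ x, m * (2 ^ n / t * heatKernel n (4 * t) x) :=
        integral_mono_of_nonneg (Eventually.of_forall fun x => abs_nonneg _)
          (((integrable_heatKernel (by positivity)).const_mul _).const_mul _)
          (Eventually.of_forall (abs_heatSol_sub_integral_mul_heatKernel_le ht hu0 hsupp hcenter))
    _ = m * 2 ^ n / t := by
        rw [integral_const_mul, integral_const_mul, integral_heatKernel (by positivity)]; ring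
    _ ≤ (m * 2 ^ n + 1) / t := by gcongr; linarith

/-- For compactly supported integrable initial data with mass `M` and center of mass at
the origin, the solution of the heat equation on `ℝⁿ` converges to `M G_t` in `L¹` with
rate `O(t⁻¹)`. -/
theorem heat_L1_convergence_rate (n : ℕ) (hn : 1 ≤ n)
    (u0 : EuclideanSpace ℝ (Fin n) → ℝ) (hu0 : Integrable u0)
    (hsupp : HasCompactSupport u0) (M : ℝ) (hM : ∫ x, u0 x = M)
    (hcenter : ∫ x, u0 x • x = (0 : EuclideanSpace ℝ (Fin n))) :
    ∃ C > 0, ∀ t ≥ (1 : ℝ),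
      (∫ x, |heatSol n u0 t x - M * heatKernel n t x|) ≤ C / t :=
  heat_L1_convergence_rate_general n u0 hu0 hsupp M hM hcenter
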